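/- arXiv:1505.00967 — 5 statements merged into one kernel-verified Lean document; each statement's English description precedes it below -/
import Mathlib

section
/- Let A be a fermionic Novikov algebra with an invariant non-degenerate symmetric bilinear form ⟨·,·⟩. Then for any x ∈ A, the subspace Im(R_x) is totally isotropic: ⟨R_x(y), R_x(z)⟩ = 0 for all y, z ∈ A. -/
theorem fermionic_mul_mul_self_eq_zero {R A : Type*} [CommSemiring R] [AddCommGroup A]
    [IsAddTorsionFree A] [Module R A] (mul : A →ₗ[R] A →ₗ[R] A)
    (hferm : ∀ x y z : A, mul (mul x y) z = - mul (mul x z) y) (x y : A) :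
    mul (mul x y) y = 0 :=
  self_eq_neg.mp (hferm x y y)

theorem stmt_3_general {A : Type*} [AddCommGroup A] [Module ℝ A]
    (mul : A →ₗ[ℝ] A →ₗ[ℝ] A)
    (hferm : ∀ x y z : A, mul (mul x y) z = - mul (mul x z) y)
    (B : A →ₗ[ℝ] A →ₗ[ℝ] ℝ)
    (hinv : ∀ x y z : A, B (mul y x) z = B y (mul z x))
    (x y z : A) :
    B (mul y x) (mul z x) = 0 := by
  have : IsAddTorsionFree A := .of_isTorsionFree ℝ A
  rw [hinv, fermionic_mul_mul_self_eq_zero mul hferm, map_zero]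

/-- In a fermionic Novikov algebra with an invariant non-degenerate symmetric bilinear form,
the image of any right multiplication operator is totally isotropic. -/
theorem stmt_3 {A : Type*} [AddCommGroup A] [Module ℝ A] [FiniteDimensional ℝ A]
    (mul : A →ₗ[ℝ] A →ₗ[ℝ] A)
    (hls : ∀ x y z : A, mul (mul x y) z - mul x (mul y z)
      = mul (mul y x) z - mul y (mul x z))
    (hferm : ∀ x y z : A, mul (mul x y) z = - mul (mul x z) y)
    (B : A →ₗ[ℝ] A →ₗ[ℝ] ℝ)
    (hsymm : ∀ u v : A, B u v = B v u)
    (hnondeg : ∀ v : A, (∀ w : A, B v w = 0) → v = 0)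
    (hinv : ∀ x y z : A, B (mul y x) z = B y (mul z x))
    (x y z : A) :
    B (mul y x) (mul z x) = 0 :=
  stmt_3_general mul hferm B hinv x y z
end

section
/- Let A be a real fermionic Novikov algebra of dimension n with an invariant non-degenerate symmetric bilinear form of signature (n-p, p) (p minus signs). Then for every x ∈ A, dim Im(R_x) ≤ p. -/
/-!
In a fermionic Novikov algebra `(y x) x = -(y x) x`, so `R_x² = 0`. Invariance then gives
`⟨y x, y x⟩ = ⟨y, (y x) x⟩ = 0`: every vector of `Im R_x` is isotropic. A subspace on which
the form is negative semidefinite meets the span of the positive basis vectors only in `0`,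
so projecting it onto the `p` negative coordinates is injective.
-/

open Module

section Fermionic

variable {R A : Type*} [CommRing R] [AddCommGroup A] [Module R A] [IsAddTorsionFree A]

theorem mul_right_mul_right_eq_zero_of_fermionic (mul : A →ₗ[R] A →ₗ[R] A)
    (hferm : ∀ x y z : A, mul (mul x y) z = - mul (mul x z) y) (x y : A) :
    mul (mul y x) x = 0 :=
  self_eq_neg.mp (hferm y x x)

theorem apply_mul_right_self_eq_zero_of_fermionic (mul : A →ₗ[R] A →ₗ[R] A)
    (hferm : ∀ x y z : A, mul (mul x y) z = - mul (mul x z) y)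
    (B : A →ₗ[R] A →ₗ[R] R) (hinv : ∀ x y z : A, B (mul y x) z = B y (mul z x))
    (x y : A) :
    B (mul y x) (mul y x) = 0 := by
  rw [hinv, mul_right_mul_right_eq_zero_of_fermionic mul hferm, map_zero]

end Fermionic

section Orthogonal

variable {K M ι : Type*} [AddCommGroup M] [Fintype ι]

theorem apply_self_eq_sum_of_orthogonal [CommRing K] [Module K M] (B : M →ₗ[K] M →ₗ[K] K)
    (b : Basis ι K M) (horth : ∀ i j, i ≠ j → B (b i) (b j) = 0) (w : M) :
    B w w = ∑ i, b.repr w i ^ 2 * B (b i) (b i) := by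
  conv_lhs => rw [← b.sum_repr w]
  simp only [map_sum, map_smul, LinearMap.sum_apply, LinearMap.smul_apply, smul_eq_mul]
  refine Finset.sum_congr rfl fun i _ => ?_
  rw [Finset.sum_eq_single i (fun j _ hji => by rw [horth j i hji, mul_zero]) (by simp)]
  ring

theorem finrank_le_card_of_apply_self_nonpos [Field K] [LinearOrder K] [IsStrictOrderedRing K]
    [Module K M] (B : M →ₗ[K] M →ₗ[K] K) (b : Basis ι K M)
    (horth : ∀ i j, i ≠ j → B (b i) (b j) = 0) (S : Finset ι)
    (hpos : ∀ i ∉ S, 0 < B (b i) (b i)) (W : Submodule K M) (hW : ∀ w ∈ W, B w w ≤ 0) :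
    finrank K W ≤ S.card := by
  let proj : W →ₗ[K] (S → K) := LinearMap.pi fun i => (b.coord i).domRestrict W
  have hinj : Function.Injective proj := by
    rw [← LinearMap.ker_eq_bot, LinearMap.ker_eq_bot']
    rintro ⟨w, hw⟩ hproj
    have hS : ∀ i ∈ S, b.repr w i = 0 := fun i hi => congrFun hproj ⟨i, hi⟩
    have hterm : ∀ i, 0 ≤ b.repr w i ^ 2 * B (b i) (b i) := fun i => by
      by_cases hi : i ∈ S
      · simp [hS i hi]
      · exact mul_nonneg (sq_nonneg _) (hpos i hi).le
    have hsum : ∑ i, b.repr w i ^ 2 * B (b i) (b i) = 0 :=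
      le_antisymm (apply_self_eq_sum_of_orthogonal B b horth w ▸ hW w hw)
        (Finset.sum_nonneg fun i _ => hterm i)
    have hzero : ∀ i, b.repr w i = 0 := fun i => by
      by_cases hi : i ∈ S
      · exact hS i hi
      · have hi0 := (Finset.sum_eq_zero_iff_of_nonneg fun j _ => hterm j).mp hsum i
          (Finset.mem_univ i)
        exact pow_eq_zero_iff two_ne_zero |>.mp
          ((mul_eq_zero.mp hi0).resolve_right (hpos i hi).ne')
    exact Subtype.ext (b.ext_elem_iff.mpr fun i => by simp [hzero i])
  calc finrank K W ≤ finrank K (S → K) := LinearMap.finrank_le_finrank_of_injective hinj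
    _ = S.card := by simp

end Orthogonal

theorem stmt_4_general {A : Type*} [AddCommGroup A] [Module ℝ A]
    {n p : ℕ}
    (mul : A →ₗ[ℝ] A →ₗ[ℝ] A)
    (hferm : ∀ x y z : A, mul (mul x y) z = - mul (mul x z) y)
    (B : A →ₗ[ℝ] A →ₗ[ℝ] ℝ)
    (hinv : ∀ x y z : A, B (mul y x) z = B y (mul z x))
    (b : Module.Basis (Fin n) ℝ A)
    (hdiag : ∀ i : Fin n, B (b i) (b i) = if (i : ℕ) < p then -1 else 1)
    (horth : ∀ i j : Fin n, i ≠ j → B (b i) (b j) = 0)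
    (x : A) :
    Module.finrank ℝ (LinearMap.range (mul.flip x)) ≤ p := by
  have hpos : ∀ i ∉ ({i : Fin n | (i : ℕ) < p} : Finset (Fin n)), 0 < B (b i) (b i) :=
    fun i hi => by rw [hdiag, if_neg (by simpa using hi)]; norm_num
  have hiso : ∀ w ∈ LinearMap.range (mul.flip x), B w w ≤ 0 := by
    have : IsAddTorsionFree A := .of_isTorsionFree ℝ A
    rintro _ ⟨y, rfl⟩
    exact (apply_mul_right_self_eq_zero_of_fermionic mul hferm B hinv x y).le
  calc Module.finrank ℝ (LinearMap.range (mul.flip x))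
      ≤ ({i : Fin n | (i : ℕ) < p} : Finset (Fin n)).card :=
        finrank_le_card_of_apply_self_nonpos B b horth _ hpos _ hiso
    _ = min n p := Fin.card_filter_val_lt
    _ ≤ p := min_le_right n p

/-- In an `n`-dimensional real fermionic Novikov algebra with an invariant non-degenerate
symmetric bilinear form of signature `(n-p, p)` (`p` minus signs), `dim Im(R_x) ≤ p`. -/
theorem stmt_4 {A : Type*} [AddCommGroup A] [Module ℝ A] [FiniteDimensional ℝ A]
    {n p : ℕ} (hpn : p ≤ n)
    (mul : A →ₗ[ℝ] A →ₗ[ℝ] A)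
    (hls : ∀ x y z : A, mul (mul x y) z - mul x (mul y z)
      = mul (mul y x) z - mul y (mul x z))
    (hferm : ∀ x y z : A, mul (mul x y) z = - mul (mul x z) y)
    (B : A →ₗ[ℝ] A →ₗ[ℝ] ℝ)
    (hsymm : ∀ u v : A, B u v = B v u)
    (hinv : ∀ x y z : A, B (mul y x) z = B y (mul z x))
    (b : Module.Basis (Fin n) ℝ A)
    (hdiag : ∀ i : Fin n, B (b i) (b i) = if (i : ℕ) < p then -1 else 1)
    (horth : ∀ i j : Fin n, i ≠ j → B (b i) (b j) = 0)
    (x : A) :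
    Module.finrank ℝ (LinearMap.range (mul.flip x)) ≤ p :=
  stmt_4_general mul hferm B hinv b hdiag horth x
end

section
/- Let A be a finite-dimensional real fermionic Novikov algebra with an invariant non-degenerate symmetric bilinear form. If the form is positive definite, then the product on A is identically zero: xy = 0 for all x, y ∈ A. -/
/-!
The fermionic identity with `y = z` gives `(xy)y = -(xy)y`, so `(xy)y = 0`. Invariance moves the
right factor `y` across the form: `⟨xy, xy⟩ = ⟨x, (xy)y⟩ = 0`, and positivity forces `xy = 0`.
-/

section

variable {R M N : Type*} [CommRing R] [AddCommGroup M] [Module R M] [AddCommGroup N] [Module R N]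

theorem mul_mul_self_right_eq_zero [IsAddTorsionFree M] (mul : M →ₗ[R] M →ₗ[R] M)
    (hferm : ∀ x y z : M, mul (mul x y) z = -mul (mul x z) y) (x y : M) :
    mul (mul x y) y = 0 :=
  self_eq_neg.mp (hferm x y y)

theorem form_mul_self_eq_zero [IsAddTorsionFree M] (mul : M →ₗ[R] M →ₗ[R] M)
    (hferm : ∀ x y z : M, mul (mul x y) z = -mul (mul x z) y) (B : M →ₗ[R] M →ₗ[R] N)
    (hinv : ∀ x y z : M, B (mul y x) z = B y (mul z x)) (x y : M) :
    B (mul x y) (mul x y) = 0 := by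
  rw [hinv, mul_mul_self_right_eq_zero mul hferm, map_zero]

end

theorem stmt_9_general {A : Type*} [AddCommGroup A] [Module ℝ A]
    (mul : A →ₗ[ℝ] A →ₗ[ℝ] A)
    (hferm : ∀ x y z : A, mul (mul x y) z = - mul (mul x z) y)
    (B : A →ₗ[ℝ] A →ₗ[ℝ] ℝ)
    (hpos : ∀ v : A, v ≠ 0 → 0 < B v v)
    (hinv : ∀ x y z : A, B (mul y x) z = B y (mul z x)) :
    ∀ x y : A, mul x y = 0 := by
  have : IsAddTorsionFree A := .of_isTorsionFree ℝ A
  intro x y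
  by_contra hxy
  exact (hpos _ hxy).ne' (form_mul_self_eq_zero mul hferm B hinv x y)

/-- A finite-dimensional real fermionic Novikov algebra with an invariant positive definite
symmetric bilinear form has identically zero product. -/
theorem stmt_9 {A : Type*} [AddCommGroup A] [Module ℝ A] [FiniteDimensional ℝ A]
    (mul : A →ₗ[ℝ] A →ₗ[ℝ] A)
    (hls : ∀ x y z : A, mul (mul x y) z - mul x (mul y z)
      = mul (mul y x) z - mul y (mul x z))
    (hferm : ∀ x y z : A, mul (mul x y) z = - mul (mul x z) y)
    (B : A →ₗ[ℝ] A →ₗ[ℝ] ℝ)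
    (hsymm : ∀ u v : A, B u v = B v u)
    (hpos : ∀ v : A, v ≠ 0 → 0 < B v v)
    (hinv : ∀ x y z : A, B (mul y x) z = B y (mul z x)) :
    ∀ x y : A, mul x y = 0 :=
  stmt_9_general mul hferm B hpos hinv
end

section
/- Let A be an n-dimensional real vector space (n ≥ 2) with basis e₁,…,eₙ, with product defined by e₁e₂ = e₂ and all other products of basis vectors zero. Then A is a fermionic Novikov algebra admitting an invariant non-degenerate symmetric bilinear form, namely the form with ⟨e₁,e₂⟩ = ⟨e₂,e₁⟩ = 1, ⟨eᵢ,eᵢ⟩ = 1 for i ≥ 3, and all other pairings zero. -/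
/-!
The product is `x y = x₁ y₂ e₂`, so every product lies in the line `R e₂`, which is killed by left
multiplication (as `(e₂)₁ = 0`). Hence `(x y) z = 0`, and both fermionic Novikov identities reduce
to the left commutativity `x (y z) = x₁ y₁ z₂ e₂ = y (x z)`. The form pairs `v` with `e_j` to the
coordinate `v_{σ j}`, where `σ` swaps the indices `1` and `2`; this gives non-degeneracy, and
invariance reads `⟨y x, z⟩ = y₁ x₂ z₁ = ⟨y, z x⟩`.
-/

namespace SingleMul

variable {R ι : Type*} [CommRing R] [DecidableEq ι] {a b : ι}

def mul (a b : ι) (x y : ι → R) : ι → R :=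
  Pi.single b (x a * y b)

theorem mul_apply_left (hab : a ≠ b) (x y : ι → R) : mul a b x y a = 0 :=
  Pi.single_eq_of_ne hab _

theorem mul_mul (hab : a ≠ b) (x y z : ι → R) : mul a b (mul a b x y) z = 0 := by
  rw [mul, mul_apply_left hab, zero_mul, Pi.single_zero]

theorem mul_left_comm (x y z : ι → R) :
    mul a b x (mul a b y z) = mul a b y (mul a b x z) := by
  simp only [mul, Pi.single_eq_same]
  ring_nf

theorem mul_sub_mul_comm (hab : a ≠ b) (x y z : ι → R) :
    mul a b (mul a b x y) z - mul a b x (mul a b y z)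
      = mul a b (mul a b y x) z - mul a b y (mul a b x z) := by
  rw [mul_mul hab, mul_mul hab, mul_left_comm]

theorem mul_mul_eq_neg (hab : a ≠ b) (x y z : ι → R) :
    mul a b (mul a b x y) z = - mul a b (mul a b x z) y := by
  rw [mul_mul hab, mul_mul hab, neg_zero]

variable [Fintype ι]

def form (a b : ι) (x y : ι → R) : R :=
  x a * y b + x b * y a + ∑ i ∈ {a, b}ᶜ, x i * y i

theorem form_comm (x y : ι → R) : form a b x y = form a b y x := by
  simp only [form, mul_comm (x _)]
  ring

theorem form_single_right (hab : a ≠ b) (v : ι → R) (j : ι) (c : R) :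
    form a b v (Pi.single j c) = v (Equiv.swap a b j) * c := by
  by_cases hja : j = a
  · subst hja
    simp [form, Pi.single_eq_of_ne hab.symm, Pi.single_apply]
  by_cases hjb : j = b
  · subst hjb
    simp [form, Pi.single_eq_of_ne hab, Pi.single_apply]
  · rw [form, Finset.sum_eq_single_of_mem j (by simp [hja, hjb])]
    · simp [Pi.single_eq_of_ne (Ne.symm hja), Pi.single_eq_of_ne (Ne.symm hjb),
        Equiv.swap_apply_of_ne_of_ne hja hjb]
    · intro i _ hij
      rw [Pi.single_eq_of_ne hij, mul_zero]

theorem eq_zero_of_form_eq_zero (hab : a ≠ b) {v : ι → R} (hv : ∀ w, form a b v w = 0) :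
    v = 0 := by
  funext i
  simpa [form_single_right hab] using hv (Pi.single (Equiv.swap a b i) 1)

theorem form_mul_left (hab : a ≠ b) (x y z : ι → R) :
    form a b (mul a b y x) z = form a b y (mul a b z x) := by
  rw [form_comm, mul, mul, form_single_right hab, form_single_right hab, Equiv.swap_apply_right]
  ring

end SingleMul

/-- The `n`-dimensional real algebra (`n ≥ 2`) with `e₁e₂ = e₂` and all other products of basis
vectors zero is a fermionic Novikov algebra admitting an invariant non-degenerate symmetric
bilinear form, namely `⟨e₁,e₂⟩ = ⟨e₂,e₁⟩ = 1`, `⟨eᵢ,eᵢ⟩ = 1` for `i ≥ 3`, other pairings zero. -/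
theorem stmt_14 {n : ℕ} (hn : 2 ≤ n)
    (mul : (Fin n → ℝ) →ₗ[ℝ] (Fin n → ℝ) →ₗ[ℝ] (Fin n → ℝ))
    (hmul : ∀ x y : Fin n → ℝ,
      mul x y = (x ⟨0, by omega⟩ * y ⟨1, by omega⟩) • (Pi.single (⟨1, by omega⟩ : Fin n) (1 : ℝ) : Fin n → ℝ))
    (B : (Fin n → ℝ) → (Fin n → ℝ) → ℝ)
    (hB : ∀ x y : Fin n → ℝ,
      B x y = x ⟨0, by omega⟩ * y ⟨1, by omega⟩ + x ⟨1, by omega⟩ * y ⟨0, by omega⟩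
        + ∑ i : Fin n, (if 2 ≤ (i : ℕ) then x i * y i else 0)) :
    (∀ x y z : Fin n → ℝ, mul (mul x y) z - mul x (mul y z)
      = mul (mul y x) z - mul y (mul x z)) ∧
    (∀ x y z : Fin n → ℝ, mul (mul x y) z = - mul (mul x z) y) ∧
    (∀ u v : Fin n → ℝ, B u v = B v u) ∧
    (∀ v : Fin n → ℝ, (∀ w : Fin n → ℝ, B v w = 0) → v = 0) ∧
    (∀ x y z : Fin n → ℝ, B (mul y x) z = B y (mul z x)) := by
  set i₀ : Fin n := ⟨0, by omega⟩
  set i₁ : Fin n := ⟨1, by omega⟩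
  have hi : i₀ ≠ i₁ := by simp [i₀, i₁, Fin.ext_iff]
  have hmul' : ∀ x y, mul x y = SingleMul.mul i₀ i₁ x y := fun x y => by
    rw [hmul, SingleMul.mul, ← Pi.single_smul', smul_eq_mul, mul_one]
  have hcompl : Finset.univ.filter (fun i : Fin n => 2 ≤ (i : ℕ)) = {i₀, i₁}ᶜ := by
    ext i
    simp only [Finset.mem_filter, Finset.mem_univ, true_and, Finset.mem_compl, Finset.mem_insert,
      Finset.mem_singleton, Fin.ext_iff, i₀, i₁]
    omega
  obtain rfl : B = SingleMul.form i₀ i₁ := by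
    funext x y
    rw [hB, SingleMul.form, ← Finset.sum_filter, hcompl]
  simp only [hmul']
  exact ⟨SingleMul.mul_sub_mul_comm hi, SingleMul.mul_mul_eq_neg hi, SingleMul.form_comm,
    fun _ => SingleMul.eq_zero_of_form_eq_zero hi, SingleMul.form_mul_left hi⟩
end

section
/- Let T be a self-adjoint operator on an n-dimensional real space V with a non-degenerate symmetric bilinear form of signature (n-p,p) with p ≤ n-p, and suppose T² = 0. Then rank(T) ≤ p, and V admits a basis in which T is represented by a block matrix consisting of k = rank(T) nilpotent 2×2 Jordan blocks and an (n-2k)×(n-2k) zero block. -/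
/-!
Since `T² = 0` and `T` is self-adjoint, `B (T x) (T x) = B x (T² x) = 0`, so `range T` is totally
isotropic. It therefore meets the positive definite span of the basis vectors of positive square
trivially, which bounds its dimension by `p`.

For the normal form, choose `v₁, …, v_k` whose images form a basis of `range T ⊆ ker T` and complete
`T v₁, …, T v_k` by `u₁, …, u_{n-2k}` to a spanning family of `ker T`. The chains `v_m, T v_m`
followed by the `u_l` span `V` and have `n = dim V` members, so they form a basis, and `T` maps
`v_m ↦ T v_m ↦ 0` and `u_l ↦ 0`.
-/

open Module LinearMap Submodule

namespace LinearMap.IsOrthoᵢ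

theorem apply_self_eq_sum {R M ι : Type*} [CommRing R] [AddCommGroup M] [Module R M] [Fintype ι]
    {B : M →ₗ[R] M →ₗ[R] R} {b : Basis ι R M} (hb : B.IsOrthoᵢ b) (x : M) :
    B x x = ∑ i, b.repr x i * b.repr x i * B (b i) (b i) := by
  conv_lhs => rw [← b.sum_repr x]
  simp only [map_sum, map_smul, LinearMap.sum_apply, LinearMap.smul_apply, smul_eq_mul]
  refine Finset.sum_congr rfl fun i _ => ?_
  rw [Finset.sum_eq_single i (fun j _ hji => by rw [hb hji, mul_zero]) (by simp)]
  ring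

variable {𝕜 V ι : Type*} [Field 𝕜] [LinearOrder 𝕜] [IsStrictOrderedRing 𝕜]
  [AddCommGroup V] [Module 𝕜 V] [Fintype ι] {B : V →ₗ[𝕜] V →ₗ[𝕜] 𝕜} {b : Basis ι 𝕜 V}

theorem apply_self_pos_of_mem_span_image (hb : B.IsOrthoᵢ b) {s : Set ι}
    (hpos : ∀ i ∈ s, 0 < B (b i) (b i)) {x : V} (hx : x ∈ span 𝕜 (b '' s)) (hx0 : x ≠ 0) :
    0 < B x x := by
  rw [b.mem_span_image] at hx
  obtain ⟨i, hi⟩ : ∃ i, b.repr x i ≠ 0 := by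
    by_contra! h
    exact hx0 (b.repr.injective (by ext i; simp [h i]))
  rw [hb.apply_self_eq_sum]
  refine Finset.sum_pos' (fun j _ => ?_) ⟨i, Finset.mem_univ _, ?_⟩
  · by_cases hj : b.repr x j = 0
    · simp [hj]
    · exact mul_nonneg (mul_self_nonneg _) (hpos j (hx (by simpa using hj))).le
  · exact mul_pos (mul_self_pos.mpr hi) (hpos i (hx (by simpa using hi)))

theorem finrank_le_card_of_isotropic [FiniteDimensional 𝕜 V] (hb : B.IsOrthoᵢ b) (s : Finset ι)
    (hpos : ∀ i ∉ s, 0 < B (b i) (b i)) {W : Submodule 𝕜 V} (hW : ∀ x ∈ W, B x x = 0) :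
    finrank 𝕜 W ≤ s.card := by
  classical
  set P := span 𝕜 (b '' ↑sᶜ)
  have hWP : Disjoint W P := by
    rw [Submodule.disjoint_def]
    intro x hxW hxP
    by_contra hx0
    exact (hb.apply_self_pos_of_mem_span_image (fun i hi => hpos i (by simpa using hi)) hxP
      hx0).ne' (hW x hxW)
  have hP : finrank 𝕜 P = sᶜ.card := by
    rw [finrank_span_set_eq_card ((b.linearIndepOn _).id_image), Set.toFinset_image,
      Finset.card_image_of_injective _ b.injective, Finset.toFinset_coe]
  have := Submodule.finrank_add_finrank_le_of_disjoint hWP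
  rw [hP, Finset.card_compl, finrank_eq_card_basis b] at this
  have := Finset.card_le_univ s
  omega

end LinearMap.IsOrthoᵢ

theorem LinearMap.IsAdjointPair.apply_self_eq_zero_of_mem_range {R M N : Type*} [CommRing R]
    [AddCommGroup M] [Module R M] [AddCommGroup N] [Module R N] {B : M →ₗ[R] M →ₗ[R] N}
    {T : Module.End R M} (hT : IsAdjointPair B B T T) (hT2 : T ∘ₗ T = 0) {x : M}
    (hx : x ∈ range T) : B x x = 0 := by
  obtain ⟨y, rfl⟩ := hx
  rw [hT, show T (T y) = 0 from LinearMap.congr_fun hT2 y, map_zero]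

section

variable {K V : Type*} [Field K] [AddCommGroup V] [Module K V] [FiniteDimensional K V]

theorem Submodule.exists_sup_span_eq_of_le {W U : Submodule K V} (h : W ≤ U) :
    ∃ u : Fin (finrank K U - finrank K W) → V, W ⊔ span K (Set.range u) = U := by
  obtain ⟨C, hC⟩ := W.exists_isCompl
  have hsup : W ⊔ C ⊓ U = U := by
    rw [← sup_inf_assoc_of_le C h, hC.sup_eq_top, top_inf_eq]
  have hinf : W ⊓ (C ⊓ U) = ⊥ := eq_bot_mono (inf_le_inf_left W inf_le_left) hC.inf_eq_bot
  have hdim : finrank K (C ⊓ U : Submodule K V) = finrank K U - finrank K W := by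
    have := finrank_sup_add_finrank_inf_eq W (C ⊓ U)
    rw [hsup, hinf, finrank_bot] at this
    omega
  have := exists_fun_fin_finrank_span_eq K ((C ⊓ U : Submodule K V) : Set V)
  rw [span_eq, hdim] at this
  obtain ⟨u, -, hu, -⟩ := this
  exact ⟨u, by rw [hu, hsup]⟩

theorem LinearMap.exists_range_le_span_range_comp (T : V →ₗ[K] V) :
    ∃ v : Fin (finrank K (range T)) → V, range T ≤ span K (Set.range (T ∘ v)) := by
  have := exists_fun_fin_finrank_span_eq K (range T : Set V)
  rw [span_eq] at this
  obtain ⟨w, hw, hspan, -⟩ := this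
  choose v hv using hw
  refine ⟨v, ?_⟩
  rw [show T ∘ v = w from funext hv, hspan]

end

section

variable {K V : Type*} [Field K] [AddCommGroup V] [Module K V] {n k : ℕ}

/-- The family `v₀, T v₀, v₁, T v₁, …, v_{k-1}, T v_{k-1}, u₀, …, u_{n-2k-1}`. -/
def jordanChainFamily (T : Module.End K V) (v : Fin k → V) (u : Fin (n - 2 * k) → V)
    (j : Fin n) : V :=
  if h : (j : ℕ) < 2 * k then (T ^ ((j : ℕ) % 2)) (v ⟨j / 2, by omega⟩)
  else u ⟨j - 2 * k, by omega⟩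

namespace jordanChainFamily

variable {T : Module.End K V} {v : Fin k → V} {u : Fin (n - 2 * k) → V}

theorem apply_of_lt {j : Fin n} (hj : (j : ℕ) < 2 * k) :
    jordanChainFamily T v u j = (T ^ ((j : ℕ) % 2)) (v ⟨j / 2, by omega⟩) :=
  dif_pos hj

theorem apply_of_le {j : Fin n} (hj : 2 * k ≤ j) :
    jordanChainFamily T v u j = u ⟨j - 2 * k, by omega⟩ :=
  dif_neg (by omega)

theorem map_apply_of_even {i j : Fin n} (hj : (j : ℕ) < 2 * k) (hj2 : (j : ℕ) % 2 = 0)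
    (hij : (i : ℕ) = j + 1) : T (jordanChainFamily T v u j) = jordanChainFamily T v u i := by
  rw [apply_of_lt hj, apply_of_lt (by omega), hj2]
  have hi2 : (i : ℕ) % 2 = 1 := by omega
  have hi : (⟨i / 2, by omega⟩ : Fin k) = ⟨j / 2, by omega⟩ := Fin.ext (by simp only; omega)
  rw [hi2, hi, pow_one, pow_zero, Module.End.one_apply]

theorem map_apply_eq_zero (hT : T ∘ₗ T = 0) (hu : ∀ l, T (u l) = 0) {j : Fin n}
    (hj : (j : ℕ) % 2 = 1 ∨ 2 * k ≤ j) : T (jordanChainFamily T v u j) = 0 := by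
  by_cases hjk : (j : ℕ) < 2 * k
  · rw [apply_of_lt hjk, hj.resolve_right (by omega), pow_one]
    exact LinearMap.congr_fun hT _
  · rw [apply_of_le (by omega)]
    exact hu _

theorem span_eq_top (hk : 2 * k ≤ n) (hv : range T ≤ span K (Set.range (T ∘ v)))
    (hu : range T ⊔ span K (Set.range u) = ker T) :
    span K (Set.range (jordanChainFamily T v u)) = ⊤ := by
  have hv_mem : ∀ m : Fin k, v m ∈ Set.range (jordanChainFamily T v u) := fun m =>
    ⟨⟨2 * m, by omega⟩, by rw [apply_of_lt (show 2 * (m : ℕ) < 2 * k by omega)]; simp⟩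
  have hTv_mem : ∀ m : Fin k, T (v m) ∈ Set.range (jordanChainFamily T v u) := fun m =>
    ⟨⟨2 * m + 1, by omega⟩, by rw [apply_of_lt (show 2 * (m : ℕ) + 1 < 2 * k by omega)]; simp [Nat.mul_add_div]⟩
  have hu_mem : ∀ l, u l ∈ Set.range (jordanChainFamily T v u) := fun l =>
    ⟨⟨2 * k + l, by omega⟩, by rw [apply_of_le (by simp)]; simp⟩
  have hker : ker T ≤ span K (Set.range (jordanChainFamily T v u)) := by
    rw [← hu]
    exact sup_le (hv.trans (span_mono (Set.range_subset_iff.2 hTv_mem)))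
      (span_mono (Set.range_subset_iff.2 hu_mem))
  have htop : ⊤ ≤ span K (Set.range v) ⊔ ker T := by
    rw [← LinearMap.map_le_map_iff, Submodule.map_top, Submodule.map_span, ← Set.range_comp]
    exact hv
  exact top_le_iff.1 (htop.trans (sup_le (span_mono (Set.range_subset_iff.2 hv_mem)) hker))

end jordanChainFamily

theorem LinearMap.toMatrix_apply_eq_jordan_of_map_basis (b : Basis (Fin n) K V)
    {T : Module.End K V} (hk : 2 * k ≤ n)
    (hpair : ∀ i j : Fin n, (j : ℕ) < 2 * k → (j : ℕ) % 2 = 0 → (i : ℕ) = j + 1 → T (b j) = b i)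
    (hzero : ∀ j : Fin n, (j : ℕ) % 2 = 1 ∨ 2 * k ≤ j → T (b j) = 0) (i j : Fin n) :
    toMatrix b b T i j = if (i : ℕ) < 2 * k ∧ (i : ℕ) % 2 = 1 ∧ (j : ℕ) = i - 1 then 1 else 0 := by
  rw [toMatrix_apply]
  by_cases hj : (j : ℕ) < 2 * k ∧ (j : ℕ) % 2 = 0
  · rw [hpair ⟨j + 1, by omega⟩ j hj.1 hj.2 rfl, b.repr_self, Finsupp.single_apply]
    exact if_congr (by simp only [Fin.ext_iff]; omega) rfl rfl
  · rw [hzero j (by omega), map_zero, Finsupp.coe_zero, Pi.zero_apply, if_neg]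
    omega

theorem LinearMap.exists_basis_toMatrix_apply_eq_jordan [FiniteDimensional K V]
    {T : Module.End K V} (hT : T ∘ₗ T = 0) (hn : finrank K V = n) :
    ∃ b : Basis (Fin n) K V, ∀ i j : Fin n, toMatrix b b T i j =
      if (i : ℕ) < 2 * finrank K (range T) ∧ (i : ℕ) % 2 = 1 ∧ (j : ℕ) = i - 1 then 1 else 0 := by
  set k := finrank K (range T)
  have hrange : range T ≤ ker T := range_le_ker_iff.2 hT
  have hker : finrank K (ker T) = n - k := by
    have := finrank_range_add_finrank_ker T
    omega
  have hk : 2 * k ≤ n := by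
    have := Submodule.finrank_mono hrange
    omega
  obtain ⟨v, hv⟩ := T.exists_range_le_span_range_comp
  obtain ⟨u, hu⟩ : ∃ u : Fin (n - 2 * k) → V, range T ⊔ span K (Set.range u) = ker T := by
    have := Submodule.exists_sup_span_eq_of_le hrange
    rwa [hker, Nat.sub_sub, ← two_mul] at this
  have hTu : ∀ l, T (u l) = 0 := fun l =>
    hu.le (le_sup_right (a := range T) (subset_span (Set.mem_range_self l)))
  let b := basisOfTopLeSpanOfCardEqFinrank (jordanChainFamily T v u)
    (jordanChainFamily.span_eq_top hk hv hu).ge (by rw [Fintype.card_fin, hn])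
  have hb : ⇑b = jordanChainFamily T v u := coe_basisOfTopLeSpanOfCardEqFinrank _ _ _
  refine ⟨b, toMatrix_apply_eq_jordan_of_map_basis b hk (fun i j hj hj2 hij => ?_) fun j hj => ?_⟩
  · rw [hb]
    exact jordanChainFamily.map_apply_of_even hj hj2 hij
  · rw [hb]
    exact jordanChainFamily.map_apply_eq_zero hT hTu hj

end

theorem stmt_18_general {V : Type*} [AddCommGroup V] [Module ℝ V] [FiniteDimensional ℝ V]
    {n p : ℕ}
    (B : V →ₗ[ℝ] V →ₗ[ℝ] ℝ)
    (b₀ : Module.Basis (Fin n) ℝ V)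
    (hdiag : ∀ i : Fin n, B (b₀ i) (b₀ i) = if (i : ℕ) < p then -1 else 1)
    (horth : ∀ i j : Fin n, i ≠ j → B (b₀ i) (b₀ j) = 0)
    (T : V →ₗ[ℝ] V)
    (hT2 : T ∘ₗ T = 0)
    (hsa : ∀ y z : V, B (T y) z = B y (T z)) :
    Module.finrank ℝ (LinearMap.range T) ≤ p ∧
    ∃ b : Module.Basis (Fin n) ℝ V, ∀ i j : Fin n,
      (LinearMap.toMatrix b b T) i j =
        if (i : ℕ) < 2 * Module.finrank ℝ (LinearMap.range T) ∧ (i : ℕ) % 2 = 1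
            ∧ (j : ℕ) = (i : ℕ) - 1
        then 1 else 0 := by
  have hpos : ∀ i ∉ ({i | (i : ℕ) < p} : Finset (Fin n)), 0 < B (b₀ i) (b₀ i) := fun i hi => by
    rw [hdiag, if_neg (by simpa using hi)]
    exact one_pos
  have hiso : ∀ x ∈ range T, B x x = 0 := fun _ =>
    IsAdjointPair.apply_self_eq_zero_of_mem_range (B := B) hsa hT2
  refine ⟨?_, exists_basis_toMatrix_apply_eq_jordan hT2
    ((finrank_eq_card_basis b₀).trans (Fintype.card_fin n))⟩
  calc finrank ℝ (range T) ≤ Finset.card {i : Fin n | (i : ℕ) < p} :=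
        (isOrthoᵢ_def.2 horth).finrank_le_card_of_isotropic _ hpos hiso
    _ = min n p := Fin.card_filter_val_lt
    _ ≤ p := min_le_right n p

/-- A self-adjoint operator `T` with `T² = 0` on an `n`-dimensional real space with a
non-degenerate symmetric bilinear form of signature `(n-p,p)`, `p ≤ n-p`, has `rank T ≤ p`,
and in a suitable basis is represented by `k = rank T` nilpotent `2×2` Jordan blocks
(with `1` in position `(2,1)`) together with a zero block. -/
theorem stmt_18 {V : Type*} [AddCommGroup V] [Module ℝ V] [FiniteDimensional ℝ V]
    {n p : ℕ} (hpn : p ≤ n - p) (hpn' : p ≤ n)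
    (B : V →ₗ[ℝ] V →ₗ[ℝ] ℝ)
    (hsymm : ∀ u v : V, B u v = B v u)
    (b₀ : Module.Basis (Fin n) ℝ V)
    (hdiag : ∀ i : Fin n, B (b₀ i) (b₀ i) = if (i : ℕ) < p then -1 else 1)
    (horth : ∀ i j : Fin n, i ≠ j → B (b₀ i) (b₀ j) = 0)
    (T : V →ₗ[ℝ] V)
    (hT2 : T ∘ₗ T = 0)
    (hsa : ∀ y z : V, B (T y) z = B y (T z)) :
    Module.finrank ℝ (LinearMap.range T) ≤ p ∧
    ∃ b : Module.Basis (Fin n) ℝ V, ∀ i j : Fin n,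
      (LinearMap.toMatrix b b T) i j =
        if (i : ℕ) < 2 * Module.finrank ℝ (LinearMap.range T) ∧ (i : ℕ) % 2 = 1
            ∧ (j : ℕ) = (i : ℕ) - 1
        then 1 else 0 :=
  stmt_18_general B b₀ hdiag horth T hT2 hsa
end
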